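/- arXiv:1911.12827 — 2 statements merged into one kernel-verified Lean document; each statement's English description precedes it below -/
import Mathlib

section
/- Let R be a finite connected simple graph with at least two vertices, and let ℰ be a cover of E(R) that contains an overlapping pair, i.e., two distinct members E₁, E₂ ∈ ℰ with E₁ ∩ E₂ ≠ ∅. Then Σ_{E ∈ ℰ} (‖E‖ − 1) ≥ |V(R)|. -/
open Finset

/-- `‖E‖`: the number of vertices incident to at least one edge of `E`. -/
def nodeCount {V : Type*} [Fintype V] [DecidableEq V] (E : Finset (Sym2 V)) : ℕ :=
  (Finset.univ.filter (fun v => ∃ e ∈ E, v ∈ e)).card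

section Aux

variable {V : Type*} [Fintype V] [DecidableEq V]

/-- The set of vertices incident to some edge of `E`. -/
def vset (E : Finset (Sym2 V)) : Finset V :=
  Finset.univ.filter (fun v => ∃ e ∈ E, v ∈ e)

lemma nodeCount_eq (E : Finset (Sym2 V)) : nodeCount E = (vset E).card := rfl

lemma mem_vset {E : Finset (Sym2 V)} {v : V} : v ∈ vset E ↔ ∃ e ∈ E, v ∈ e := by
  simp [vset]

lemma vset_union (E F : Finset (Sym2 V)) : vset (E ∪ F) = vset E ∪ vset F := by
  ext v
  simp only [mem_vset, Finset.mem_union]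
  constructor
  · rintro ⟨e, he | he, hv⟩
    · exact Or.inl ⟨e, he, hv⟩
    · exact Or.inr ⟨e, he, hv⟩
  · rintro (⟨e, he, hv⟩ | ⟨e, he, hv⟩)
    · exact ⟨e, Or.inl he, hv⟩
    · exact ⟨e, Or.inr he, hv⟩

lemma vset_nonempty {E : Finset (Sym2 V)} (h : E.Nonempty) : (vset E).Nonempty := by
  obtain ⟨e, he⟩ := h
  obtain ⟨a, b⟩ := e
  exact ⟨a, mem_vset.mpr ⟨s(a, b), he, by simp⟩⟩

lemma one_le_nodeCount {E : Finset (Sym2 V)} (h : E.Nonempty) : 1 ≤ nodeCount E := by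
  rw [nodeCount_eq]
  exact Finset.card_pos.mpr (vset_nonempty h)

/-- Merging two members with intersecting vertex sets. -/
lemma nodeCount_union_le {E F : Finset (Sym2 V)} (hE : E.Nonempty) (hF : F.Nonempty)
    (hint : (vset E ∩ vset F).Nonempty) :
    nodeCount (E ∪ F) - 1 ≤ (nodeCount E - 1) + (nodeCount F - 1) := by
  have h1 := one_le_nodeCount hE
  have h2 := one_le_nodeCount hF
  have h3 : 1 ≤ (vset E ∩ vset F).card := Finset.card_pos.mpr hint
  have h4 : (vset E ∪ vset F).card + (vset E ∩ vset F).card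
      = (vset E).card + (vset F).card := Finset.card_union_add_card_inter _ _
  have h5 : nodeCount (E ∪ F) = (vset E ∪ vset F).card := by
    rw [nodeCount_eq, vset_union]
  have h6 : nodeCount E = (vset E).card := nodeCount_eq _
  have h7 : nodeCount F = (vset F).card := nodeCount_eq _
  omega

lemma exists_cross (R : SimpleGraph V) (A : Finset V) :
    ∀ {a b : V} (_ : R.Walk a b), a ∈ A → b ∉ A →
      ∃ u u', R.Adj u u' ∧ u ∈ A ∧ u' ∉ A := by
  intro a b p
  induction p with
  | nil => intro h h'; exact absurd h h'
  | @cons u v w h p ih =>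
    intro ha hb
    by_cases hv : v ∈ A
    · exact ih hv hb
    · exact ⟨u, v, h, ha, hv⟩

lemma exists_adj (R : SimpleGraph V) (hconn : R.Connected) (hcard : 2 ≤ Fintype.card V)
    (v : V) : ∃ w, R.Adj v w := by
  obtain ⟨w, hw⟩ := Fintype.exists_ne_of_one_lt_card (by omega) v
  obtain ⟨p⟩ := hconn v w
  cases p with
  | nil => exact absurd rfl hw
  | cons h _ => exact ⟨_, h⟩

lemma vset_edgeFinset (R : SimpleGraph V) [DecidableRel R.Adj]
    (hconn : R.Connected) (hcard : 2 ≤ Fintype.card V) :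
    vset R.edgeFinset = Finset.univ := by
  ext v
  simp only [Finset.mem_univ, iff_true]
  obtain ⟨w, hw⟩ := exists_adj R hconn hcard v
  exact mem_vset.mpr ⟨s(v, w), by simp [SimpleGraph.mem_edgeFinset, hw], by simp⟩

/-- Main lemma: every cover with nonempty members satisfies `Σ (‖E‖-1) ≥ |V| - 1`. -/
lemma key (R : SimpleGraph V) [DecidableRel R.Adj]
    (hconn : R.Connected) (hcard : 2 ≤ Fintype.card V) :
    ∀ n (ℰ : Finset (Finset (Sym2 V))), ℰ.card = n →
      (∀ E ∈ ℰ, E.Nonempty) → ℰ.sup id = R.edgeFinset →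
      Fintype.card V - 1 ≤ ∑ E ∈ ℰ, (nodeCount E - 1) := by
  intro n
  induction n using Nat.strong_induction_on with
  | _ n ih =>
    intro ℰ hcardℰ hne hcover
    -- the graph has an edge, so ℰ is nonempty
    have hedge : R.edgeFinset.Nonempty := by
      obtain ⟨v⟩ := hconn.nonempty
      obtain ⟨w, hw⟩ := exists_adj R hconn hcard v
      exact ⟨s(v, w), by simp [SimpleGraph.mem_edgeFinset, hw]⟩
    have hℰne : ℰ.Nonempty := by
      rcases ℰ.eq_empty_or_nonempty with h | h
      · exfalso
        obtain ⟨e, heedge⟩ := hedge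
        rw [← hcover, h, Finset.sup_empty] at heedge
        simp at heedge
      · exact h
    by_cases hn1 : ℰ.card = 1
    · obtain ⟨E, rfl⟩ := Finset.card_eq_one.mp hn1
      have hE : E = R.edgeFinset := by simpa using hcover
      rw [Finset.sum_singleton, hE, nodeCount_eq, vset_edgeFinset R hconn hcard,
        Finset.card_univ]
    · -- at least two members: find an intersecting pair and merge
      have hn2 : 2 ≤ ℰ.card := by
        have hpos : 0 < ℰ.card := hℰne.card_pos
        omega
      obtain ⟨E, hE⟩ := hℰne
      have hsub' : ∀ F ∈ ℰ, F ⊆ R.edgeFinset := by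
        intro F hF
        rw [← hcover]
        exact Finset.le_sup (f := id) hF
      -- find E' ≠ E with intersecting vertex set
      have hpair : ∃ E' ∈ ℰ, E' ≠ E ∧ (vset E ∩ vset E').Nonempty := by
        by_cases huniv : vset E = Finset.univ
        · obtain ⟨E'', hE'', hne''⟩ := Finset.exists_mem_ne (show 1 < ℰ.card by omega) E
          obtain ⟨v, hv⟩ := vset_nonempty (hne E'' hE'')
          exact ⟨E'', hE'', hne'', ⟨v, Finset.mem_inter.mpr ⟨huniv ▸ Finset.mem_univ v, hv⟩⟩⟩
        · have hb : ∃ b, b ∉ vset E := by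
            by_contra h
            push_neg at h
            exact huniv (Finset.eq_univ_iff_forall.mpr h)
          obtain ⟨b, hb⟩ := hb
          obtain ⟨a, ha⟩ := vset_nonempty (hne E hE)
          obtain ⟨p⟩ := hconn a b
          obtain ⟨u, u', hadj, hu, hu'⟩ := exists_cross R (vset E) p ha hb
          have he : s(u, u') ∈ R.edgeFinset := by
            simp [SimpleGraph.mem_edgeFinset, hadj]
          rw [← hcover] at he
          obtain ⟨F, hF, heF⟩ := Finset.mem_sup.mp he
          refine ⟨F, hF, ?_, ⟨u, Finset.mem_inter.mpr
            ⟨hu, mem_vset.mpr ⟨s(u, u'), heF, by simp⟩⟩⟩⟩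
          intro hFE
          exact hu' (hFE ▸ mem_vset.mpr ⟨s(u, u'), heF, by simp⟩)
      obtain ⟨E', hE', hne', hint⟩ := hpair
      have hE'erase : E' ∈ ℰ.erase E := Finset.mem_erase.mpr ⟨hne', hE'⟩
      set 𝒟 : Finset (Finset (Sym2 V)) := (ℰ.erase E).erase E' with h𝒟
      set ℰ' : Finset (Finset (Sym2 V)) := insert (E ∪ E') 𝒟 with hℰ'
      have hcard𝒟 : 𝒟.card = ℰ.card - 2 := by
        rw [h𝒟, Finset.card_erase_of_mem hE'erase, Finset.card_erase_of_mem hE]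
        omega
      have hltcard : ℰ'.card < n := by
        have hins := Finset.card_insert_le (E ∪ E') 𝒟
        rw [← hℰ'] at hins
        omega
      have hne'' : ∀ F ∈ ℰ', F.Nonempty := by
        intro F hF
        rcases Finset.mem_insert.mp hF with h | h
        · subst h
          exact (hne E hE).mono Finset.subset_union_left
        · exact hne F (Finset.mem_of_mem_erase (Finset.mem_of_mem_erase h))
      have hcov'' : ℰ'.sup id = R.edgeFinset := by
        apply le_antisymm
        · apply Finset.sup_le
          intro F hF
          rcases Finset.mem_insert.mp hF with h | h
          · subst h
            exact Finset.union_subset (hsub' E hE) (hsub' E' hE')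
          · exact hsub' F (Finset.mem_of_mem_erase (Finset.mem_of_mem_erase h))
        · rw [← hcover]
          apply Finset.sup_le
          intro F hF
          by_cases h1 : F = E
          · subst h1
            exact le_trans Finset.subset_union_left
              (Finset.le_sup (f := id) (Finset.mem_insert_self _ _))
          · by_cases h2 : F = E'
            · subst h2
              exact le_trans Finset.subset_union_right
                (Finset.le_sup (f := id) (Finset.mem_insert_self _ _))
            · exact Finset.le_sup (f := id) (Finset.mem_insert_of_mem
                (Finset.mem_erase.mpr ⟨h2, Finset.mem_erase.mpr ⟨h1, hF⟩⟩))
      have hIH := ih ℰ'.card hltcard ℰ' rfl hne'' hcov''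
      -- compare the sums
      have hsum1 : ∑ F ∈ ℰ', (nodeCount F - 1)
          ≤ (nodeCount (E ∪ E') - 1) + ∑ F ∈ 𝒟, (nodeCount F - 1) := by
        by_cases hmem : (E ∪ E') ∈ 𝒟
        · rw [hℰ', Finset.insert_eq_self.mpr hmem]
          exact Nat.le_add_left _ _
        · rw [hℰ', Finset.sum_insert hmem]
      have hsum2 : ∑ F ∈ ℰ, (nodeCount F - 1)
          = (nodeCount E - 1) + ((nodeCount E' - 1) + ∑ F ∈ 𝒟, (nodeCount F - 1)) := by
        rw [h𝒟, ← Finset.add_sum_erase ℰ (fun F => nodeCount F - 1) hE,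
          ← Finset.add_sum_erase (ℰ.erase E) (fun F => nodeCount F - 1) hE'erase]
      have hmerge := nodeCount_union_le (hne E hE) (hne E' hE') hint
      omega

end Aux

/-- Let `R` be a finite connected simple graph with at least two vertices,
and let `ℰ` be a cover of `E(R)` that contains an overlapping pair, i.e., two distinct
members `E₁, E₂ ∈ ℰ` with `E₁ ∩ E₂ ≠ ∅`. Then `Σ_{E ∈ ℰ} (‖E‖ − 1) ≥ |V(R)|`. -/
theorem cover_overlapping_sum_nodeCount_sub_one_ge {V : Type*} [Fintype V] [DecidableEq V]
    (R : SimpleGraph V) [DecidableRel R.Adj]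
    (hconn : R.Connected) (hcard : 2 ≤ Fintype.card V)
    (ℰ : Finset (Finset (Sym2 V)))
    (hne : ∀ E ∈ ℰ, E.Nonempty)
    (hsub : ∀ E ∈ ℰ, E ⊆ R.edgeFinset)
    (hcover : ℰ.sup id = R.edgeFinset)
    (E₁ E₂ : Finset (Sym2 V)) (hE₁ : E₁ ∈ ℰ) (hE₂ : E₂ ∈ ℰ) (hne12 : E₁ ≠ E₂)
    (hoverlap : (E₁ ∩ E₂).Nonempty) :
    Fintype.card V ≤ ∑ E ∈ ℰ, (nodeCount E - 1) := by
  have hE₂erase : E₂ ∈ ℰ.erase E₁ := Finset.mem_erase.mpr ⟨(Ne.symm hne12), hE₂⟩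
  set 𝒟 : Finset (Finset (Sym2 V)) := (ℰ.erase E₁).erase E₂ with h𝒟
  set ℰ' : Finset (Finset (Sym2 V)) := insert (E₁ ∪ E₂) 𝒟 with hℰ'
  have hne'' : ∀ F ∈ ℰ', F.Nonempty := by
    intro F hF
    rcases Finset.mem_insert.mp hF with h | h
    · subst h
      exact (hne E₁ hE₁).mono Finset.subset_union_left
    · exact hne F (Finset.mem_of_mem_erase (Finset.mem_of_mem_erase h))
  have hcov'' : ℰ'.sup id = R.edgeFinset := by
    apply le_antisymm
    · apply Finset.sup_le
      intro F hF
      rcases Finset.mem_insert.mp hF with h | h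
      · subst h
        exact Finset.union_subset (hsub E₁ hE₁) (hsub E₂ hE₂)
      · exact hsub F (Finset.mem_of_mem_erase (Finset.mem_of_mem_erase h))
    · rw [← hcover]
      apply Finset.sup_le
      intro F hF
      by_cases h1 : F = E₁
      · subst h1
        exact le_trans Finset.subset_union_left
          (Finset.le_sup (f := id) (Finset.mem_insert_self _ _))
      · by_cases h2 : F = E₂
        · subst h2
          exact le_trans Finset.subset_union_right
            (Finset.le_sup (f := id) (Finset.mem_insert_self _ _))
        · exact Finset.le_sup (f := id) (Finset.mem_insert_of_mem
            (Finset.mem_erase.mpr ⟨h2, Finset.mem_erase.mpr ⟨h1, hF⟩⟩))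
  have hkey := key R hconn hcard ℰ'.card ℰ' rfl hne'' hcov''
  -- the overlapping pair shares at least two vertices
  obtain ⟨e, he⟩ := hoverlap
  have he₁ : e ∈ E₁ := (Finset.mem_inter.mp he).1
  have he₂ : e ∈ E₂ := (Finset.mem_inter.mp he).2
  obtain ⟨x, y⟩ := e
  have hxy : x ≠ y := by
    have hmem : s(x, y) ∈ R.edgeSet := SimpleGraph.mem_edgeFinset.mp (hsub E₁ hE₁ he₁)
    intro h
    exact R.irrefl (h ▸ hmem)
  have hx : x ∈ vset E₁ ∩ vset E₂ :=
    Finset.mem_inter.mpr ⟨mem_vset.mpr ⟨s(x, y), he₁, by simp⟩,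
      mem_vset.mpr ⟨s(x, y), he₂, by simp⟩⟩
  have hy : y ∈ vset E₁ ∩ vset E₂ :=
    Finset.mem_inter.mpr ⟨mem_vset.mpr ⟨s(x, y), he₁, by simp⟩,
      mem_vset.mpr ⟨s(x, y), he₂, by simp⟩⟩
  have hpairsub : ({x, y} : Finset V) ⊆ vset E₁ ∩ vset E₂ := by
    intro v hv
    rcases Finset.mem_insert.mp hv with h | h
    · exact h ▸ hx
    · exact (Finset.mem_singleton.mp h) ▸ hy
  have hint2 : 2 ≤ (vset E₁ ∩ vset E₂).card := by
    have hle := Finset.card_le_card hpairsub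
    rwa [Finset.card_pair hxy] at hle
  have h1 := one_le_nodeCount (hne E₁ hE₁)
  have h2 := one_le_nodeCount (hne E₂ hE₂)
  have h4 : (vset E₁ ∪ vset E₂).card + (vset E₁ ∩ vset E₂).card
      = (vset E₁).card + (vset E₂).card := Finset.card_union_add_card_inter _ _
  have h5 : nodeCount (E₁ ∪ E₂) = (vset E₁ ∪ vset E₂).card := by
    rw [nodeCount_eq, vset_union]
  have h6 : nodeCount E₁ = (vset E₁).card := nodeCount_eq _
  have h7 : nodeCount E₂ = (vset E₂).card := nodeCount_eq _
  have h8 : (vset E₁ ∩ vset E₂).card ≤ (vset E₁ ∪ vset E₂).card :=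
    Finset.card_le_card (Finset.inter_subset_left.trans Finset.subset_union_left)
  have hsum1 : ∑ F ∈ ℰ', (nodeCount F - 1)
      ≤ (nodeCount (E₁ ∪ E₂) - 1) + ∑ F ∈ 𝒟, (nodeCount F - 1) := by
    by_cases hmem : (E₁ ∪ E₂) ∈ 𝒟
    · rw [hℰ', Finset.insert_eq_self.mpr hmem]
      exact Nat.le_add_left _ _
    · rw [hℰ', Finset.sum_insert hmem]
  have hsum2 : ∑ F ∈ ℰ, (nodeCount F - 1)
      = (nodeCount E₁ - 1) + ((nodeCount E₂ - 1) + ∑ F ∈ 𝒟, (nodeCount F - 1)) := by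
    rw [h𝒟, ← Finset.add_sum_erase ℰ (fun F => nodeCount F - 1) hE₁,
      ← Finset.add_sum_erase (ℰ.erase E₁) (fun F => nodeCount F - 1) hE₂erase]
  omega
end

section
/- Let r ≥ 3 be an odd integer and let R be a finite simple graph with r vertices. Let πₙ (n ∈ ℕ) and π be Borel probability measures on ℕ × [0,1] such that πₙ → π weakly. If sup_n (πₙ^M)_{r−1, (r−1)/2} → 0 and sup_n (πₙ^M)_{r, (r+1)/2} → 0 as M → ∞, then sup_n max_{∅ ≠ E ⊆ E(R)} (πₙ^M)_{‖E‖, |E|} → 0 as M → ∞. -/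
open MeasureTheory Filter Topology Finset
open scoped ENNReal

/-- The cross-moment `(π)_{a,b} = E[(X)_a Y^b]` for `(X,Y) ∼ π`, a Borel probability
measure on `ℕ × [0,1]`, where `(x)_a` is the falling factorial. -/
noncomputable def mom (μ : Measure (ℕ × unitInterval)) (a b : ℕ) : ℝ≥0∞ :=
  ∫⁻ p, (p.1.descFactorial a : ℝ≥0∞) * ENNReal.ofReal ((p.2 : ℝ) ^ b) ∂μ

/-- The truncated cross-moment `(π^M)_{a,b} = E[(X)_a Y^b 1(X > M)]`. -/
noncomputable def tmom (μ : Measure (ℕ × unitInterval)) (M a b : ℕ) : ℝ≥0∞ :=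
  ∫⁻ p, (if M < p.1 then (p.1.descFactorial a : ℝ≥0∞) * ENNReal.ofReal ((p.2 : ℝ) ^ b) else 0) ∂μ

lemma my_pow_le_two_pow_mul_descFactorial : ∀ (a x : ℕ), 2 * a ≤ x →
    x ^ a ≤ 2 ^ a * x.descFactorial a := by
  intro a
  induction a with
  | zero => simp
  | succ a ih =>
    intro x h
    have h' : 2 * a ≤ x := by omega
    have hx : x ≤ 2 * (x - a) := by omega
    calc x ^ (a + 1) = x ^ a * x := pow_succ x a
      _ ≤ (2 ^ a * x.descFactorial a) * (2 * (x - a)) :=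
          Nat.mul_le_mul (ih x h') hx
      _ = 2 ^ (a + 1) * ((x - a) * x.descFactorial a) := by ring
      _ = 2 ^ (a + 1) * x.descFactorial (a + 1) := by rw [Nat.descFactorial_succ]

lemma my_descFactorial_mono : ∀ (b : ℕ) {a x : ℕ}, a ≤ b → b ≤ x →
    x.descFactorial a ≤ x.descFactorial b := by
  intro b
  induction b with
  | zero => intro a x hab _; simp_all
  | succ b ih =>
    intro a x hab hbx
    rcases Nat.eq_or_lt_of_le hab with rfl | h
    · exact le_rfl
    · calc x.descFactorial a ≤ x.descFactorial b := ih (by omega) (by omega)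
        _ ≤ (x - b) * x.descFactorial b := Nat.le_mul_of_pos_left _ (by omega)
        _ = x.descFactorial (b + 1) := (Nat.descFactorial_succ x b).symm

lemma my_sym2_card_le {V : Type*} [Fintype V] [DecidableEq V] (e : Sym2 V) :
    (Finset.univ.filter (· ∈ e)).card ≤ 2 := by
  induction e using Sym2.inductionOn with
  | hf a b =>
    have hsub : (Finset.univ.filter (· ∈ s(a, b))) ⊆ {a, b} := by
      intro x hx
      simp only [Finset.mem_filter, Finset.mem_univ, true_and, Sym2.mem_iff] at hx
      simpa using hx
    exact (Finset.card_le_card hsub).trans ((Finset.card_insert_le a {b}).trans (by simp))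

lemma my_nodeCount_le {V : Type*} [Fintype V] [DecidableEq V] (E : Finset (Sym2 V)) :
    nodeCount E ≤ 2 * E.card := by
  classical
  have hsub : (Finset.univ.filter (fun v => ∃ e ∈ E, v ∈ e)) ⊆
      E.biUnion (fun e => Finset.univ.filter (· ∈ e)) := by
    intro v hv
    simp only [Finset.mem_filter, Finset.mem_univ, true_and] at hv
    obtain ⟨e, he, hve⟩ := hv
    exact Finset.mem_biUnion.mpr ⟨e, he, by simp [hve]⟩
  calc nodeCount E ≤ (E.biUnion (fun e => Finset.univ.filter (· ∈ e))).card :=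
        Finset.card_le_card hsub
    _ ≤ ∑ e ∈ E, (Finset.univ.filter (· ∈ e)).card := Finset.card_biUnion_le
    _ ≤ ∑ _e ∈ E, 2 := Finset.sum_le_sum (fun e _ => my_sym2_card_le e)
    _ = 2 * E.card := by rw [Finset.sum_const, smul_eq_mul, Nat.mul_comm]

/-- Let `r ≥ 3` be odd and `R` a finite simple graph with `r` vertices.
Let `πₙ` and `π` be Borel probability measures on `ℕ × [0,1]` with `πₙ → π` weakly. If
`sup_n (πₙ^M)_{r−1,(r−1)/2} → 0` and `sup_n (πₙ^M)_{r,(r+1)/2} → 0` as `M → ∞`, then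
`sup_n max_{∅ ≠ E ⊆ E(R)} (πₙ^M)_{‖E‖,|E|} → 0` as `M → ∞`. -/
theorem sup_max_truncated_moment_tendsto_zero_of_odd
    {V : Type*} [Fintype V] [DecidableEq V] (R : SimpleGraph V) [DecidableRel R.Adj]
    (r : ℕ) (hr : 3 ≤ r) (hrodd : Odd r) (hcard : Fintype.card V = r)
    (π : ℕ → ProbabilityMeasure (ℕ × unitInterval)) (πl : ProbabilityMeasure (ℕ × unitInterval))
    (hweak : Tendsto π atTop (𝓝 πl))
    (hsup₁ : Tendsto (fun M => ⨆ n, tmom (π n).toMeasure M (r - 1) ((r - 1) / 2)) atTop (𝓝 0))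
    (hsup₂ : Tendsto (fun M => ⨆ n, tmom (π n).toMeasure M r ((r + 1) / 2)) atTop (𝓝 0)) :
    Tendsto (fun M => ⨆ n,
        (R.edgeFinset.powerset.filter (fun E => E.Nonempty)).sup
          (fun E => tmom (π n).toMeasure M (nodeCount E) E.card))
      atTop (𝓝 0) := by
  have hodd : r % 2 = 1 := Nat.odd_iff.mp hrodd
  set k : ℕ := (r - 1) / 2 with hkdef
  have hk : 1 ≤ k := by omega
  have hk0 : (0 : ℝ) < (k : ℝ) := by exact_mod_cast hk
  rw [show r - 1 = 2 * k from by omega] at hsup₁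
  rw [show (r + 1) / 2 = k + 1 from by omega] at hsup₂
  set S₁ : ℕ → ℝ≥0∞ := fun M => ⨆ n, tmom (π n).toMeasure M (2 * k) k with hS₁def
  set S₂ : ℕ → ℝ≥0∞ := fun M => ⨆ n, tmom (π n).toMeasure M r (k + 1) with hS₂def
  set B : ℕ → ℝ≥0∞ := fun M => (2 ^ (2 * k) * S₁ M) ^ ((k : ℝ)⁻¹) + S₂ M with hBdef
  have h2top : (2 : ℝ≥0∞) ^ (2 * k) ≠ ⊤ := by
    exact ENNReal.pow_ne_top (by norm_num)
  have hBtendsto : Tendsto B atTop (𝓝 0) := by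
    have h1 : Tendsto (fun M => 2 ^ (2 * k) * S₁ M) atTop (𝓝 0) := by
      have := ENNReal.Tendsto.const_mul hsup₁ (Or.inr h2top)
      simpa using this
    have h2 : Tendsto (fun M => (2 ^ (2 * k) * S₁ M) ^ ((k : ℝ)⁻¹)) atTop (𝓝 0) := by
      have := h1.ennrpow_const ((k : ℝ)⁻¹)
      rwa [ENNReal.zero_rpow_of_pos (by positivity)] at this
    simpa using h2.add hsup₂
  have hev : ∀ᶠ M in atTop, (⨆ n,
        (R.edgeFinset.powerset.filter (fun E => E.Nonempty)).sup
          (fun E => tmom (π n).toMeasure M (nodeCount E) E.card)) ≤ B M := by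
    have hpos : (0 : ℝ≥0∞) < (2 ^ (2 * k) : ℝ≥0∞)⁻¹ :=
      ENNReal.inv_pos.mpr h2top
    have hev1 : ∀ᶠ M in atTop, S₁ M < (2 ^ (2 * k) : ℝ≥0∞)⁻¹ :=
      hsup₁.eventually (gt_mem_nhds hpos)
    filter_upwards [eventually_ge_atTop (2 * (2 * k + 1)), hev1] with M hM hSlt
    have ht : 2 ^ (2 * k) * S₁ M ≤ 1 := by
      calc 2 ^ (2 * k) * S₁ M ≤ 2 ^ (2 * k) * (2 ^ (2 * k) : ℝ≥0∞)⁻¹ :=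
            mul_le_mul_right hSlt.le _
        _ = 1 := ENNReal.mul_inv_cancel (by positivity) h2top
    refine iSup_le fun n => Finset.sup_le fun E hE => ?_
    obtain ⟨hEsub, hEne⟩ := Finset.mem_filter.mp hE
    have hEcard : 0 < E.card := Finset.Nonempty.card_pos hEne
    have he0 : (0 : ℝ) < (E.card : ℝ) := by exact_mod_cast hEcard
    have hv2e : nodeCount E ≤ 2 * E.card := my_nodeCount_le E
    have hvr : nodeCount E ≤ r := by
      have := Finset.card_filter_le Finset.univ (fun v => ∃ e ∈ E, v ∈ e)
      simpa [nodeCount, hcard] using this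
    set μ := (π n).toMeasure with hμdef
    rcases lt_or_ge k E.card with hek | hek
    · -- many edges: bound by the (r, k+1) moment
      have hpt : tmom μ M (nodeCount E) E.card ≤ tmom μ M r (k + 1) := by
        refine lintegral_mono fun p => ?_
        by_cases hp : M < p.1
        · simp only [hp, if_true]
          refine mul_le_mul' ?_ ?_
          · exact_mod_cast my_descFactorial_mono r hvr (by omega)
          · exact ENNReal.ofReal_le_ofReal
              (pow_le_pow_of_le_one p.2.2.1 p.2.2.2 (by omega))
        · simp [hp]
      exact (hpt.trans (le_iSup (fun n => tmom (π n).toMeasure M r (k + 1)) n)).trans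
        (self_le_add_left _ _)
    · -- few edges: Hölder interpolation
      set w : ℕ × unitInterval → ℝ≥0∞ :=
        fun p => (p.1 : ℝ≥0∞) ^ 2 * ENNReal.ofReal (p.2 : ℝ) with hwdef
      set g : ℕ × unitInterval → ℝ≥0∞ :=
        fun p => if M < p.1 then (w p) ^ k else 0 with hgdef
      have hθpos : 0 < (E.card : ℝ) / (k : ℝ) := by positivity
      have hgmeas : Measurable g := by
        apply Measurable.ite
        · exact measurable_fst measurableSet_Ioi
        · have hcast : Measurable (fun p : ℕ × unitInterval => (p.1 : ℝ≥0∞)) :=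
            measurable_from_top.comp measurable_fst
          exact ((hcast.pow_const 2).mul
            (ENNReal.measurable_ofReal.comp
              (measurable_subtype_coe.comp measurable_snd))).pow_const k
        · exact measurable_const
      have hA : tmom μ M (nodeCount E) E.card ≤
          ∫⁻ p, (g p) ^ ((E.card : ℝ) / (k : ℝ)) ∂μ := by
        refine lintegral_mono fun p => ?_
        by_cases hp : M < p.1
        · simp only [hgdef, hp, if_true]
          have hrw : ((w p) ^ k) ^ ((E.card : ℝ) / (k : ℝ)) = (w p) ^ E.card := by
            rw [← ENNReal.rpow_natCast (w p) k, ← ENNReal.rpow_mul,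
              ← ENNReal.rpow_natCast (w p) E.card]
            congr 1
            field_simp
          rw [hrw]
          have h1 : (p.1.descFactorial (nodeCount E) : ℝ≥0∞) ≤ (p.1 : ℝ≥0∞) ^ (2 * E.card) := by
            have : p.1.descFactorial (nodeCount E) ≤ p.1 ^ (2 * E.card) :=
              le_trans (Nat.descFactorial_le_pow _ _) (Nat.pow_le_pow_right (by omega) hv2e)
            exact_mod_cast this
          have h2 : ENNReal.ofReal ((p.2 : ℝ) ^ E.card) = ENNReal.ofReal (p.2 : ℝ) ^ E.card :=
            ENNReal.ofReal_pow p.2.2.1 E.card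
          calc (p.1.descFactorial (nodeCount E) : ℝ≥0∞) * ENNReal.ofReal ((p.2 : ℝ) ^ E.card)
              ≤ (p.1 : ℝ≥0∞) ^ (2 * E.card) * ENNReal.ofReal (p.2 : ℝ) ^ E.card := by
                rw [h2]; exact mul_le_mul' h1 le_rfl
            _ = (w p) ^ E.card := by rw [hwdef]; simp only; rw [mul_pow, ← pow_mul]
        · simp [hgdef, hp, ENNReal.zero_rpow_of_pos hθpos]
      have hB2 : ∫⁻ p, (g p) ^ ((E.card : ℝ) / (k : ℝ)) ∂μ ≤
          (∫⁻ p, g p ∂μ) ^ ((E.card : ℝ) / (k : ℝ)) := by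
        have hq : 0 ≤ 1 - (E.card : ℝ) / (k : ℝ) := by
          rw [sub_nonneg, div_le_one hk0]
          exact_mod_cast hek
        have := ENNReal.lintegral_mul_norm_pow_le (μ := μ) hgmeas.aemeasurable
          (aemeasurable_const (b := (1 : ℝ≥0∞))) hθpos.le hq (by ring)
        simpa [lintegral_one, measure_univ] using this
      have hC : ∫⁻ p, g p ∂μ ≤ 2 ^ (2 * k) * S₁ M := by
        have hpoint : ∀ p, g p ≤ 2 ^ (2 * k) * (if M < p.1 then
            (p.1.descFactorial (2 * k) : ℝ≥0∞) * ENNReal.ofReal ((p.2 : ℝ) ^ k) else 0) := by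
          intro p
          by_cases hp : M < p.1
          · simp only [hgdef, hp, if_true]
            have hxk : (p.1 : ℕ) ^ (2 * k) ≤ 2 ^ (2 * k) * p.1.descFactorial (2 * k) :=
              my_pow_le_two_pow_mul_descFactorial (2 * k) p.1 (by omega)
            have hxk' : ((p.1 : ℝ≥0∞)) ^ (2 * k) ≤
                2 ^ (2 * k) * (p.1.descFactorial (2 * k) : ℝ≥0∞) := by
              exact_mod_cast hxk
            have h2 : ENNReal.ofReal ((p.2 : ℝ) ^ k) = ENNReal.ofReal (p.2 : ℝ) ^ k :=
              ENNReal.ofReal_pow p.2.2.1 k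
            calc (w p) ^ k = (p.1 : ℝ≥0∞) ^ (2 * k) * ENNReal.ofReal (p.2 : ℝ) ^ k := by
                  rw [hwdef]; simp only; rw [mul_pow, ← pow_mul]
              _ ≤ (2 ^ (2 * k) * (p.1.descFactorial (2 * k) : ℝ≥0∞)) *
                  ENNReal.ofReal (p.2 : ℝ) ^ k := mul_le_mul' hxk' le_rfl
              _ = 2 ^ (2 * k) * ((p.1.descFactorial (2 * k) : ℝ≥0∞) *
                  ENNReal.ofReal ((p.2 : ℝ) ^ k)) := by rw [h2, mul_assoc]
          · simp [hgdef, hp]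
        calc ∫⁻ p, g p ∂μ ≤ ∫⁻ p, 2 ^ (2 * k) * (if M < p.1 then
              (p.1.descFactorial (2 * k) : ℝ≥0∞) * ENNReal.ofReal ((p.2 : ℝ) ^ k) else 0) ∂μ :=
            lintegral_mono hpoint
          _ = 2 ^ (2 * k) * tmom μ M (2 * k) k := by
              rw [lintegral_const_mul' _ _ h2top]; rfl
          _ ≤ 2 ^ (2 * k) * S₁ M :=
            mul_le_mul_right (le_iSup (fun n => tmom (π n).toMeasure M (2 * k) k) n) _
      calc tmom μ M (nodeCount E) E.card
          ≤ (∫⁻ p, g p ∂μ) ^ ((E.card : ℝ) / (k : ℝ)) := hA.trans hB2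
        _ ≤ (2 ^ (2 * k) * S₁ M) ^ ((E.card : ℝ) / (k : ℝ)) :=
            ENNReal.rpow_le_rpow hC hθpos.le
        _ ≤ (2 ^ (2 * k) * S₁ M) ^ ((k : ℝ)⁻¹) := by
            refine ENNReal.rpow_le_rpow_of_exponent_ge ht ?_
            have h1e : (1 : ℝ) ≤ (E.card : ℝ) := by exact_mod_cast hEcard
            rw [inv_eq_one_div]
            gcongr
        _ ≤ B M := le_self_add
  exact tendsto_of_tendsto_of_tendsto_of_le_of_le' tendsto_const_nhds hBtendsto
    (Eventually.of_forall fun M => zero_le) hev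
end
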